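/- Let α ∈ R^m be a syzygy and let 𝒢 be a signature Gröbner basis up to signature σ(α). Then there exists β ∈ R^m with σ(β) | σ(α) such that β is either a regular S-pair spair(γ,δ) of two elements γ, δ ∈ 𝒢 or is of the form eᵢ for some i, and β regular s-reduces to zero w.r.t. 𝒢. -/
import Mathlib


open MvPolynomial

namespace SigGB

/-- A monomial order on the monomials of `R = K[x₁,…,xₙ]` (represented by their
exponent vectors in `Fin n →₀ ℕ`) together with a compatible module monomial order
on the module monomials of `R^m` (represented by pairs `(μ, i)` for `x^μ·eᵢ`). -/
structure SigOrder (n m : ℕ) : Type where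
  /-- the monomial order `≤` on `R` -/
  rle : (Fin n →₀ ℕ) → (Fin n →₀ ℕ) → Prop
  /-- the module monomial order `≤` on `R^m` -/
  mle : (Fin n →₀ ℕ) × Fin m → (Fin n →₀ ℕ) × Fin m → Prop
  rle_refl : ∀ a, rle a a
  rle_trans : ∀ {a b c}, rle a b → rle b c → rle a c
  rle_antisymm : ∀ {a b}, rle a b → rle b a → a = b
  rle_total : ∀ a b, rle a b ∨ rle b a
  rle_wf : WellFounded fun a b => rle a b ∧ a ≠ b
  rle_add : ∀ (c : Fin n →₀ ℕ) {a b}, rle a b → rle (c + a) (c + b)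
  mle_refl : ∀ S, mle S S
  mle_trans : ∀ {S T U}, mle S T → mle T U → mle S U
  mle_antisymm : ∀ {S T}, mle S T → mle T S → S = T
  mle_total : ∀ S T, mle S T ∨ mle T S
  mle_wf : WellFounded fun S T => mle S T ∧ S ≠ T
  mle_add : ∀ (c : Fin n →₀ ℕ) {S T}, mle S T → mle (c + S.1, S.2) (c + T.1, T.2)
  compat : ∀ (a b : Fin n →₀ ℕ) (i : Fin m), rle a b ↔ mle (a, i) (b, i)

variable {K : Type*} [Field K] {n m : ℕ}

/-- the strict monomial order -/
def SigOrder.rlt (O : SigOrder n m) (a b : Fin n →₀ ℕ) : Prop :=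
  O.rle a b ∧ a ≠ b

/-- the strict module monomial order -/
def SigOrder.mlt (O : SigOrder n m) (S T : (Fin n →₀ ℕ) × Fin m) : Prop :=
  O.mle S T ∧ S ≠ T

/-- divisibility of module monomials: `S ∣ T` iff `T = c·S` for some monomial `c` -/
def mmDvd (S T : (Fin n →₀ ℕ) × Fin m) : Prop :=
  ∃ c : Fin n →₀ ℕ, T = (c + S.1, S.2)

/-- `π : R^m → R`, `α ↦ Σ αᵢ fᵢ` -/
noncomputable def proj (f α : Fin m → MvPolynomial (Fin n) K) : MvPolynomial (Fin n) K :=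
  ∑ i, α i * f i

open Classical in
/-- the `≤`-maximal monomial of `p` (junk value `0` for `p = 0`) -/
noncomputable def leadMon (O : SigOrder n m) (p : MvPolynomial (Fin n) K) : Fin n →₀ ℕ :=
  if h : ∃ μ, μ ∈ p.support ∧ ∀ ν ∈ p.support, O.rle ν μ then h.choose else 0

/-- the lead coefficient of `p` -/
noncomputable def leadCoeff (O : SigOrder n m) (p : MvPolynomial (Fin n) K) : K :=
  p.coeff (leadMon O p)

/-- the lead term `lt(p)` (a term, i.e. monomial together with its coefficient) -/
noncomputable def leadTerm (O : SigOrder n m) (p : MvPolynomial (Fin n) K) :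
    MvPolynomial (Fin n) K :=
  monomial (leadMon O p) (leadCoeff O p)

/-- `lt(p) ≃ lt(q)`: the lead terms agree up to a nonzero scalar -/
def LeadTermAssoc (O : SigOrder n m) (p q : MvPolynomial (Fin n) K) : Prop :=
  p ≠ 0 ∧ q ≠ 0 ∧ leadMon O p = leadMon O q

open Classical in
/-- the module monomial of the signature `σ(α)`: the `≤`-maximal module monomial
occurring in `α` (junk value for `α = 0`) -/
noncomputable def sigMon [NeZero m] (O : SigOrder n m)
    (α : Fin m → MvPolynomial (Fin n) K) : (Fin n →₀ ℕ) × Fin m :=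
  if h : ∃ S : (Fin n →₀ ℕ) × Fin m, (α S.2).coeff S.1 ≠ 0 ∧
      ∀ T : (Fin n →₀ ℕ) × Fin m, (α T.2).coeff T.1 ≠ 0 → O.mle T S
  then h.choose
  else (0, ⟨0, Nat.pos_of_ne_zero (NeZero.ne m)⟩)

/-- the coefficient of the signature term of `α` -/
noncomputable def sigCoeff [NeZero m] (O : SigOrder n m)
    (α : Fin m → MvPolynomial (Fin n) K) : K :=
  (α (sigMon O α).2).coeff (sigMon O α).1

/-- `b` is a (not necessarily monic) monomial of `R` -/
def IsMonomial (b : MvPolynomial (Fin n) K) : Prop :=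
  ∃ (ν : Fin n →₀ ℕ) (c : K), c ≠ 0 ∧ b = monomial ν c

/-- `b·β` s-reduces the term of `π(α)` at the monomial `μ`:
`b` is a monomial, `μ` is a term of `π(α)`, `lt(b·π(β))` equals that term, and
`σ(b·β) ≤ σ(α)`. -/
def SRed [NeZero m] (O : SigOrder n m) (f α β : Fin m → MvPolynomial (Fin n) K)
    (b : MvPolynomial (Fin n) K) (μ : Fin n →₀ ℕ) : Prop :=
  IsMonomial b ∧ (proj f α).coeff μ ≠ 0 ∧
  leadTerm O (b * proj f β) = monomial μ ((proj f α).coeff μ) ∧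
  O.mle (sigMon O (b • β)) (sigMon O α)

/-- a regular s-reduction: additionally `σ(b·β) ≠ σ(α)` (as module monomials) -/
def RegSRed [NeZero m] (O : SigOrder n m) (f α β : Fin m → MvPolynomial (Fin n) K)
    (b : MvPolynomial (Fin n) K) (μ : Fin n →₀ ℕ) : Prop :=
  SRed O f α β b μ ∧ sigMon O (b • β) ≠ sigMon O α

/-- one s-reduction step w.r.t. `G` -/
def Step [NeZero m] (O : SigOrder n m) (f : Fin m → MvPolynomial (Fin n) K)
    (G : Set (Fin m → MvPolynomial (Fin n) K))
    (α γ : Fin m → MvPolynomial (Fin n) K) : Prop :=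
  ∃ β ∈ G, ∃ b μ, SRed O f α β b μ ∧ γ = α - b • β

/-- one regular s-reduction step w.r.t. `G` -/
def RegStep [NeZero m] (O : SigOrder n m) (f : Fin m → MvPolynomial (Fin n) K)
    (G : Set (Fin m → MvPolynomial (Fin n) K))
    (α γ : Fin m → MvPolynomial (Fin n) K) : Prop :=
  ∃ β ∈ G, ∃ b μ, RegSRed O f α β b μ ∧ γ = α - b • β

/-- `α` s-reduces to zero w.r.t. `G`: some sequence of s-reduction steps turns it
into a syzygy -/
def SReducesToZero [NeZero m] (O : SigOrder n m) (f : Fin m → MvPolynomial (Fin n) K)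
    (G : Set (Fin m → MvPolynomial (Fin n) K))
    (α : Fin m → MvPolynomial (Fin n) K) : Prop :=
  ∃ γ, Relation.ReflTransGen (Step O f G) α γ ∧ proj f γ = 0

/-- `α` regular s-reduces to zero w.r.t. `G` -/
def RegSReducesToZero [NeZero m] (O : SigOrder n m) (f : Fin m → MvPolynomial (Fin n) K)
    (G : Set (Fin m → MvPolynomial (Fin n) K))
    (α : Fin m → MvPolynomial (Fin n) K) : Prop :=
  ∃ γ, Relation.ReflTransGen (RegStep O f G) α γ ∧ proj f γ = 0

/-- `G` is a signature Gröbner basis in signature `T` -/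
def IsSigGBIn [NeZero m] (O : SigOrder n m) (f : Fin m → MvPolynomial (Fin n) K)
    (G : Set (Fin m → MvPolynomial (Fin n) K)) (T : (Fin n →₀ ℕ) × Fin m) : Prop :=
  ∀ α : Fin m → MvPolynomial (Fin n) K, α ≠ 0 → sigMon O α = T → SReducesToZero O f G α

/-- `G` is a signature Gröbner basis up to signature `T` -/
def IsSigGBUpTo [NeZero m] (O : SigOrder n m) (f : Fin m → MvPolynomial (Fin n) K)
    (G : Set (Fin m → MvPolynomial (Fin n) K)) (T : (Fin n →₀ ℕ) × Fin m) : Prop :=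
  ∀ S, O.mlt S T → IsSigGBIn O f G S

/-- `G` is a signature Gröbner basis -/
def IsSigGB [NeZero m] (O : SigOrder n m) (f : Fin m → MvPolynomial (Fin n) K)
    (G : Set (Fin m → MvPolynomial (Fin n) K)) : Prop :=
  ∀ T, IsSigGBIn O f G T

/-- the monic least common multiple of two monomials (componentwise max) -/
noncomputable def monLcm (μ ν : Fin n →₀ ℕ) : Fin n →₀ ℕ :=
  Finsupp.zipWith max (max_self 0) μ ν

/-- the S-pair `spair(α,β) = (λ/lt(π α))·α − (λ/lt(π β))·β` -/
noncomputable def spair (O : SigOrder n m) (f α β : Fin m → MvPolynomial (Fin n) K) :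
    Fin m → MvPolynomial (Fin n) K :=
  (monomial (monLcm (leadMon O (proj f α)) (leadMon O (proj f β)) - leadMon O (proj f α))
      (leadCoeff O (proj f α))⁻¹ : MvPolynomial (Fin n) K) • α -
  (monomial (monLcm (leadMon O (proj f α)) (leadMon O (proj f β)) - leadMon O (proj f β))
      (leadCoeff O (proj f β))⁻¹ : MvPolynomial (Fin n) K) • β

/-- `spair(α,β)` is a regular S-pair: `π α ≠ 0 ≠ π β` and the signatures of the two
halves differ -/
def IsRegularSPair [NeZero m] (O : SigOrder n m)
    (f α β : Fin m → MvPolynomial (Fin n) K) : Prop :=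
  proj f α ≠ 0 ∧ proj f β ≠ 0 ∧
  sigMon O ((monomial (monLcm (leadMon O (proj f α)) (leadMon O (proj f β)) -
      leadMon O (proj f α)) (leadCoeff O (proj f α))⁻¹ : MvPolynomial (Fin n) K) • α) ≠
  sigMon O ((monomial (monLcm (leadMon O (proj f α)) (leadMon O (proj f β)) -
      leadMon O (proj f β)) (leadCoeff O (proj f β))⁻¹ : MvPolynomial (Fin n) K) • β)

/-- the signature `T` is predictably syzygy: some syzygy `s` has `σ(s) < T` and
`σ(s) ∣ T` -/
def PredictablySyzygy [NeZero m] (O : SigOrder n m) (f : Fin m → MvPolynomial (Fin n) K)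
    (T : (Fin n →₀ ℕ) × Fin m) : Prop :=
  ∃ s : Fin m → MvPolynomial (Fin n) K, s ≠ 0 ∧ proj f s = 0 ∧
    O.mlt (sigMon O s) T ∧ mmDvd (sigMon O s) T

/-- a rewrite order on `G ∪ H`: a partial order that is total on `G` -/
def IsRewriteOrder (G H : Set (Fin m → MvPolynomial (Fin n) K))
    (rew : (Fin m → MvPolynomial (Fin n) K) → (Fin m → MvPolynomial (Fin n) K) → Prop) :
    Prop :=
  (∀ α ∈ G ∪ H, rew α α) ∧
  (∀ α β γ : Fin m → MvPolynomial (Fin n) K, rew α β → rew β γ → rew α γ) ∧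
  (∀ α β : Fin m → MvPolynomial (Fin n) K, rew α β → rew β α → α = β) ∧
  (∀ α ∈ G, ∀ β ∈ G, rew α β ∨ rew β α)

/-- `β` admits a rewriter in signature `T`, i.e. some monomial multiple of `β` has
signature `T` -/
def IsRewriterIn [NeZero m] (O : SigOrder n m) (β : Fin m → MvPolynomial (Fin n) K)
    (T : (Fin n →₀ ℕ) × Fin m) : Prop :=
  ∃ a : Fin n →₀ ℕ, sigMon O ((monomial a (1 : K) : MvPolynomial (Fin n) K) • β) = T

/-- `x^a·α` is the canonical rewriter in signature `T` w.r.t. `rew`: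
`α ∈ G ∪ H`, `σ(x^a·α) = T`, and `α` is `rew`-maximal among elements of `G ∪ H`
admitting a rewriter in `T` -/
def IsCanonicalRewriter [NeZero m] (O : SigOrder n m)
    (G H : Set (Fin m → MvPolynomial (Fin n) K))
    (rew : (Fin m → MvPolynomial (Fin n) K) → (Fin m → MvPolynomial (Fin n) K) → Prop)
    (α : Fin m → MvPolynomial (Fin n) K) (a : Fin n →₀ ℕ)
    (T : (Fin n →₀ ℕ) × Fin m) : Prop :=
  α ∈ G ∪ H ∧ sigMon O ((monomial a (1 : K) : MvPolynomial (Fin n) K) • α) = T ∧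
  ∀ β ∈ G ∪ H, IsRewriterIn O β T → rew β α

/-- `γ` is regular top s-reducible w.r.t. `G` -/
def RegTopSReducible [NeZero m] (O : SigOrder n m) (f : Fin m → MvPolynomial (Fin n) K)
    (G : Set (Fin m → MvPolynomial (Fin n) K))
    (γ : Fin m → MvPolynomial (Fin n) K) : Prop :=
  ∃ β ∈ G, ∃ b, RegSRed O f γ β b (leadMon O (proj f γ))

/-- `G` is a rewrite basis in signature `T`: the canonical rewriter in `T` is not
regular top s-reducible w.r.t. `G` -/
def IsRewriteBasisIn [NeZero m] (O : SigOrder n m) (f : Fin m → MvPolynomial (Fin n) K)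
    (G H : Set (Fin m → MvPolynomial (Fin n) K))
    (rew : (Fin m → MvPolynomial (Fin n) K) → (Fin m → MvPolynomial (Fin n) K) → Prop)
    (T : (Fin n →₀ ℕ) × Fin m) : Prop :=
  ∀ (α : Fin m → MvPolynomial (Fin n) K) (a : Fin n →₀ ℕ),
    IsCanonicalRewriter O G H rew α a T →
    ¬ RegTopSReducible O f G ((monomial a (1 : K) : MvPolynomial (Fin n) K) • α)

/-- `G` is a rewrite basis up to signature `T` -/
def IsRewriteBasisUpTo [NeZero m] (O : SigOrder n m) (f : Fin m → MvPolynomial (Fin n) K)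
    (G H : Set (Fin m → MvPolynomial (Fin n) K))
    (rew : (Fin m → MvPolynomial (Fin n) K) → (Fin m → MvPolynomial (Fin n) K) → Prop)
    (T : (Fin n →₀ ℕ) × Fin m) : Prop :=
  ∀ S, O.mlt S T → IsRewriteBasisIn O f G H rew S

/-- one ordinary polynomial reduction step w.r.t. a set `G` of polynomials -/
def PolyRedStep (O : SigOrder n m) (G : Set (MvPolynomial (Fin n) K))
    (p q : MvPolynomial (Fin n) K) : Prop :=
  ∃ g ∈ G, ∃ (b : MvPolynomial (Fin n) K) (μ : Fin n →₀ ℕ),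
    IsMonomial b ∧ p.coeff μ ≠ 0 ∧
    leadTerm O (b * g) = monomial μ (p.coeff μ) ∧ q = p - b * g

/-- `p` reduces to zero w.r.t. `G` under ordinary polynomial reduction -/
def PolyReducesToZero (O : SigOrder n m) (G : Set (MvPolynomial (Fin n) K))
    (p : MvPolynomial (Fin n) K) : Prop :=
  Relation.ReflTransGen (PolyRedStep O G) p 0

/-- `G` is a Gröbner basis for the ideal `I` -/
def IsGroebnerBasis (O : SigOrder n m) (G : Set (MvPolynomial (Fin n) K))
    (I : Ideal (MvPolynomial (Fin n) K)) : Prop :=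
  G ⊆ ↑I ∧ ∀ p ∈ I, PolyReducesToZero O G p

section Infra

variable {K : Type*} [Field K] {n m : ℕ}

/-- abbreviation for module monomials -/
local notation "MM" => (Fin n →₀ ℕ) × Fin m

namespace SigOrder

variable (O : SigOrder n m)

lemma rle_of_not_rle {a b : Fin n →₀ ℕ} (h : ¬ O.rle a b) : O.rle b a :=
  (O.rle_total a b).resolve_left h

lemma mle_of_not_mle {S T : MM} (h : ¬ O.mle S T) : O.mle T S :=
  (O.mle_total S T).resolve_left h

lemma mlt_of_mle_of_mlt {S T U : MM} (h1 : O.mle S T) (h2 : O.mlt T U) : O.mlt S U :=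
  ⟨O.mle_trans h1 h2.1, fun h => h2.2 (O.mle_antisymm h2.1 (h ▸ h1))⟩

lemma mlt_of_mlt_of_mle {S T U : MM} (h1 : O.mlt S T) (h2 : O.mle T U) : O.mlt S U :=
  ⟨O.mle_trans h1.1 h2, fun h => h1.2 (O.mle_antisymm h1.1 (h ▸ h2))⟩

lemma mlt_trans {S T U : MM} (h1 : O.mlt S T) (h2 : O.mlt T U) : O.mlt S U :=
  O.mlt_of_mle_of_mlt h1.1 h2

lemma rlt_add (c : Fin n →₀ ℕ) {a b : Fin n →₀ ℕ} (h : O.rlt a b) :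
    O.rlt (c + a) (c + b) :=
  ⟨O.rle_add c h.1, fun hc => h.2 (add_left_cancel hc)⟩

lemma rle_of_rle_add (c : Fin n →₀ ℕ) {a b : Fin n →₀ ℕ} (h : O.rle (c + a) (c + b)) :
    O.rle a b := by
  rcases O.rle_total a b with h' | h'
  · exact h'
  · have := O.rle_antisymm h (O.rle_add c h')
    rw [add_left_cancel this]
    exact O.rle_refl b

lemma mle_of_mle_add (c : Fin n →₀ ℕ) {S T : MM} (h : O.mle (c + S.1, S.2) (c + T.1, T.2)) :
    O.mle S T := by
  rcases O.mle_total S T with h' | h'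
  · exact h'
  · have h2 := O.mle_add c h'
    have h3 := O.mle_antisymm h h2
    have h4 : S = T := by
      obtain ⟨h5, h6⟩ := Prod.ext_iff.mp h3
      exact Prod.ext (add_left_cancel h5) h6
    rw [h4]; exact O.mle_refl T

/-- every monomial is `≥ 1` for a monomial order -/
lemma zero_rle (c : Fin n →₀ ℕ) : O.rle 0 c := by
  by_contra h
  have hlt : O.rlt c 0 := ⟨O.rle_of_not_rle h, fun hc => h (hc ▸ O.rle_refl c)⟩
  have hdesc : ∀ k : ℕ, O.rlt ((k + 1) • c) (k • c) := by
    intro k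
    have h1 : O.rle (k • c + c) (k • c + 0) := O.rle_add _ hlt.1
    rw [add_zero] at h1
    refine ⟨by rwa [succ_nsmul], fun hc => ?_⟩
    have : k • c + c = k • c + 0 := by rw [add_zero, ← succ_nsmul, hc]
    exact hlt.2 (add_left_cancel this)
  obtain ⟨x, ⟨k, rfl⟩, hmin⟩ := O.rle_wf.has_min (Set.range fun k : ℕ => k • c)
    ⟨0 • c, 0, rfl⟩
  exact hmin ((k + 1) • c) ⟨k + 1, rfl⟩ (hdesc k)

lemma rle_add_left (a b : Fin n →₀ ℕ) : O.rle a (b + a) := by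
  have := O.rle_add a (O.zero_rle b)
  rwa [add_zero, add_comm a b] at this

lemma mle_add_left (S : MM) (b : Fin n →₀ ℕ) : O.mle S (b + S.1, S.2) := by
  have h : O.rle S.1 (b + S.1) := O.rle_add_left S.1 b
  have := (O.compat S.1 (b + S.1) S.2).mp h
  simpa using this

end SigOrder

/-- existence of a maximum in a nonempty finite set w.r.t. a total transitive relation -/
lemma exists_max_finset {X : Type*} {r : X → X → Prop} (hr : ∀ a b, r a b ∨ r b a)
    (htr : ∀ {a b c}, r a b → r b c → r a c)
    (s : Finset X) (hs : s.Nonempty) : ∃ a ∈ s, ∀ b ∈ s, r b a := by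
  classical
  induction s using Finset.induction_on with
  | empty => exact absurd hs (by simp)
  | @insert x s hx ih =>
    rcases s.eq_empty_or_nonempty with rfl | hne
    · exact ⟨x, by simp, by simpa using (hr x x).elim id id⟩
    · obtain ⟨a, ha, hmax⟩ := ih hne
      rcases hr a x with h | h
      · refine ⟨x, by simp, fun b hb => ?_⟩
        rcases Finset.mem_insert.mp hb with rfl | hb
        · exact (hr b b).elim id id
        · exact htr (hmax b hb) h
      · refine ⟨a, by simp [ha], fun b hb => ?_⟩
        rcases Finset.mem_insert.mp hb with rfl | hb
        · exact h
        · exact hmax b hb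

end Infra
section Infra2

variable {K : Type*} [Field K] {n m : ℕ}

/-- the coefficient of `α` at the module monomial `S` -/
def mcoeff (α : Fin m → MvPolynomial (Fin n) K) (S : (Fin n →₀ ℕ) × Fin m) : K :=
  (α S.2).coeff S.1

lemma mcoeff_zero (S : (Fin n →₀ ℕ) × Fin m) :
    mcoeff (0 : Fin m → MvPolynomial (Fin n) K) S = 0 := by
  simp [mcoeff]

lemma mcoeff_sub (α β : Fin m → MvPolynomial (Fin n) K) (S) :
    mcoeff (α - β) S = mcoeff α S - mcoeff β S := by
  simp [mcoeff]

lemma ne_zero_of_mcoeff {α : Fin m → MvPolynomial (Fin n) K} {S} (h : mcoeff α S ≠ 0) :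
    α ≠ 0 := fun h0 => h (h0 ▸ mcoeff_zero S)

open Classical in
lemma sigMon_exists [NeZero m] (O : SigOrder n m) {α : Fin m → MvPolynomial (Fin n) K}
    (h : α ≠ 0) :
    ∃ S : (Fin n →₀ ℕ) × Fin m, (α S.2).coeff S.1 ≠ 0 ∧
      ∀ T : (Fin n →₀ ℕ) × Fin m, (α T.2).coeff T.1 ≠ 0 → O.mle T S := by
  classical
  set F : Finset ((Fin n →₀ ℕ) × Fin m) :=
    Finset.univ.biUnion fun j => (α j).support.image fun ν => (ν, j) with hF
  have hmem : ∀ S : (Fin n →₀ ℕ) × Fin m, S ∈ F ↔ (α S.2).coeff S.1 ≠ 0 := by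
    intro S
    simp only [hF, Finset.mem_biUnion, Finset.mem_univ, true_and, Finset.mem_image]
    constructor
    · rintro ⟨j, ν, hν, rfl⟩
      simpa using MvPolynomial.mem_support_iff.mp hν
    · intro hS
      exact ⟨S.2, S.1, MvPolynomial.mem_support_iff.mpr hS, rfl⟩
  have hne : F.Nonempty := by
    obtain ⟨j, hj⟩ := Function.ne_iff.mp h
    obtain ⟨ν, hν⟩ := MvPolynomial.ne_zero_iff.mp hj
    exact ⟨(ν, j), (hmem (ν, j)).mpr hν⟩
  obtain ⟨S, hS, hmax⟩ := exists_max_finset O.mle_total (fun h1 h2 => O.mle_trans h1 h2) F hne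
  exact ⟨S, (hmem S).mp hS, fun T hT => hmax T ((hmem T).mpr hT)⟩

lemma sigMon_spec [NeZero m] (O : SigOrder n m) {α : Fin m → MvPolynomial (Fin n) K}
    (h : α ≠ 0) :
    mcoeff α (sigMon O α) ≠ 0 ∧ ∀ S, mcoeff α S ≠ 0 → O.mle S (sigMon O α) := by
  have hex := sigMon_exists O h
  rw [sigMon, dif_pos hex]
  exact hex.choose_spec

lemma sigMon_eq_of [NeZero m] (O : SigOrder n m) {α : Fin m → MvPolynomial (Fin n) K}
    {U : (Fin n →₀ ℕ) × Fin m} (h1 : mcoeff α U ≠ 0) (h2 : ∀ S, mcoeff α S ≠ 0 → O.mle S U) :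
    sigMon O α = U := by
  have hα : α ≠ 0 := ne_zero_of_mcoeff h1
  obtain ⟨hc, hmax⟩ := sigMon_spec O hα
  exact O.mle_antisymm (h2 _ hc) (hmax _ h1)

lemma leadMon_spec (O : SigOrder n m) {p : MvPolynomial (Fin n) K} (hp : p ≠ 0) :
    p.coeff (leadMon O p) ≠ 0 ∧ ∀ ν, p.coeff ν ≠ 0 → O.rle ν (leadMon O p) := by
  have hex : ∃ μ, μ ∈ p.support ∧ ∀ ν ∈ p.support, O.rle ν μ := by
    obtain ⟨μ, hμ, hmax⟩ := exists_max_finset O.rle_total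
      (fun h1 h2 => O.rle_trans h1 h2) p.support
      (Finset.nonempty_iff_ne_empty.mpr (fun h => hp (MvPolynomial.support_eq_empty.mp h)))
    exact ⟨μ, hμ, hmax⟩
  rw [leadMon, dif_pos hex]
  obtain ⟨h1, h2⟩ := hex.choose_spec
  exact ⟨MvPolynomial.mem_support_iff.mp h1,
    fun ν hν => h2 ν (MvPolynomial.mem_support_iff.mpr hν)⟩

lemma leadMon_eq_of (O : SigOrder n m) {p : MvPolynomial (Fin n) K} {μ : Fin n →₀ ℕ}
    (h1 : p.coeff μ ≠ 0) (h2 : ∀ ν, p.coeff ν ≠ 0 → O.rle ν μ) : leadMon O p = μ := by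
  have hp : p ≠ 0 := fun h0 => h1 (by simp [h0])
  obtain ⟨hc, hmax⟩ := leadMon_spec O hp
  exact O.rle_antisymm (h2 _ hc) (hmax _ h1)

lemma leadCoeff_ne_zero (O : SigOrder n m) {p : MvPolynomial (Fin n) K} (hp : p ≠ 0) :
    leadCoeff O p ≠ 0 := (leadMon_spec O hp).1

lemma coeff_leadMon_eq_zero (O : SigOrder n m) {p : MvPolynomial (Fin n) K}
    {ν : Fin n →₀ ℕ} (h : ¬ O.rle ν (leadMon O p)) : p.coeff ν = 0 := by
  by_cases hp : p = 0
  · simp [hp]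
  · by_contra hc
    exact h ((leadMon_spec O hp).2 ν hc)

end Infra2
section Infra3

open MvPolynomial

variable {K : Type*} [Field K] {n m : ℕ}

lemma fle_add_left (ν μ : Fin n →₀ ℕ) : ν ≤ ν + μ := by
  rw [Finsupp.le_def]; intro x; simp

lemma monomial_mul_ne_zero {ν : Fin n →₀ ℕ} {c : K} (hc : c ≠ 0)
    {p : MvPolynomial (Fin n) K} (hp : p ≠ 0) :
    (monomial ν c : MvPolynomial (Fin n) K) * p ≠ 0 :=
  mul_ne_zero (fun h => hc (by simpa using (MvPolynomial.monomial_eq_zero).mp h)) hp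

lemma leadMon_monomial_mul (O : SigOrder n m) {ν : Fin n →₀ ℕ} {c : K} (hc : c ≠ 0)
    {p : MvPolynomial (Fin n) K} (hp : p ≠ 0) :
    leadMon O ((monomial ν c : MvPolynomial (Fin n) K) * p) = ν + leadMon O p := by
  refine leadMon_eq_of O ?_ ?_
  · rw [coeff_monomial_mul', if_pos (fle_add_left ν _), add_tsub_cancel_left]
    exact mul_ne_zero hc (leadMon_spec O hp).1
  · intro τ hτ
    rw [coeff_monomial_mul'] at hτ
    split_ifs at hτ with hle
    · have h1 : p.coeff (τ - ν) ≠ 0 := fun h => hτ (by simp [h])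
      have h2 := (leadMon_spec O hp).2 _ h1
      have h3 := O.rle_add ν h2
      rwa [add_tsub_cancel_of_le hle] at h3
    · exact absurd rfl hτ

lemma leadCoeff_monomial_mul (O : SigOrder n m) {ν : Fin n →₀ ℕ} {c : K} (hc : c ≠ 0)
    {p : MvPolynomial (Fin n) K} (hp : p ≠ 0) :
    leadCoeff O ((monomial ν c : MvPolynomial (Fin n) K) * p) = c * leadCoeff O p := by
  rw [leadCoeff, leadMon_monomial_mul O hc hp, coeff_monomial_mul',
    if_pos (fle_add_left ν _), add_tsub_cancel_left, leadCoeff]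

lemma leadTerm_eq_monomial_iff (O : SigOrder n m) {p : MvPolynomial (Fin n) K}
    {μ : Fin n →₀ ℕ} {c : K} (hc : c ≠ 0) :
    leadTerm O p = monomial μ c ↔ p ≠ 0 ∧ leadMon O p = μ ∧ leadCoeff O p = c := by
  constructor
  · intro h
    have hp : p ≠ 0 := by
      intro h0
      rw [leadTerm, h0] at h
      have : (0 : K) = c := by
        have := congrArg (fun q => MvPolynomial.coeff μ q) h
        simpa [leadCoeff] using this
      exact hc this.symm
    have hlc := leadCoeff_ne_zero O hp
    rw [leadTerm] at h
    rcases (MvPolynomial.monomial_eq_monomial_iff _ _ _ _).mp h with ⟨h1, h2⟩ | ⟨h1, _⟩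
    · exact ⟨hp, h1, h2⟩
    · exact absurd h1 hlc
  · rintro ⟨hp, h1, h2⟩
    rw [leadTerm, h1, h2]

/-- coefficient of a monomial scalar multiple -/
lemma mcoeff_monomial_smul {ν : Fin n →₀ ℕ} {c : K} (β : Fin m → MvPolynomial (Fin n) K)
    (S : (Fin n →₀ ℕ) × Fin m) :
    mcoeff ((monomial ν c : MvPolynomial (Fin n) K) • β) S =
      if ν ≤ S.1 then c * mcoeff β (S.1 - ν, S.2) else 0 := by
  simp only [mcoeff, Pi.smul_apply, smul_eq_mul]
  exact coeff_monomial_mul' ..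

lemma monomial_smul_ne_zero {ν : Fin n →₀ ℕ} {c : K} (hc : c ≠ 0)
    {β : Fin m → MvPolynomial (Fin n) K} (hβ : β ≠ 0) :
    (monomial ν c : MvPolynomial (Fin n) K) • β ≠ 0 := by
  obtain ⟨j, hj⟩ := Function.ne_iff.mp hβ
  intro h
  have := congrFun h j
  simp only [Pi.smul_apply, smul_eq_mul, Pi.zero_apply] at this
  exact (monomial_mul_ne_zero hc (by simpa using hj)) this

lemma sigMon_monomial_smul [NeZero m] (O : SigOrder n m) {ν : Fin n →₀ ℕ} {c : K}
    (hc : c ≠ 0) {β : Fin m → MvPolynomial (Fin n) K} (hβ : β ≠ 0) :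
    sigMon O ((monomial ν c : MvPolynomial (Fin n) K) • β) =
      (ν + (sigMon O β).1, (sigMon O β).2) := by
  obtain ⟨h1, h2⟩ := sigMon_spec O hβ
  refine sigMon_eq_of O ?_ ?_
  · rw [mcoeff_monomial_smul, if_pos (fle_add_left ν _)]
    simpa [add_tsub_cancel_left] using mul_ne_zero hc h1
  · intro S hS
    rw [mcoeff_monomial_smul] at hS
    split_ifs at hS with hle
    · have h3 : mcoeff β (S.1 - ν, S.2) ≠ 0 := fun h => hS (by simp [h])
      have h4 := O.mle_add ν (h2 _ h3)
      simpa [add_tsub_cancel_of_le hle] using h4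
    · exact absurd rfl hS

lemma proj_zero (f : Fin m → MvPolynomial (Fin n) K) :
    proj f (0 : Fin m → MvPolynomial (Fin n) K) = 0 := by simp [proj]

lemma proj_sub (f α β : Fin m → MvPolynomial (Fin n) K) :
    proj f (α - β) = proj f α - proj f β := by
  simp [proj, sub_mul, Finset.sum_sub_distrib]

lemma proj_smul (f : Fin m → MvPolynomial (Fin n) K) (b : MvPolynomial (Fin n) K)
    (β : Fin m → MvPolynomial (Fin n) K) :
    proj f (b • β) = b * proj f β := by
  simp [proj, Finset.mul_sum, mul_assoc]

lemma ne_zero_of_proj {f α : Fin m → MvPolynomial (Fin n) K} (h : proj f α ≠ 0) : α ≠ 0 :=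
  fun h0 => h (h0 ▸ proj_zero f)

lemma proj_single (f : Fin m → MvPolynomial (Fin n) K) (i : Fin m) :
    proj f (Pi.single i (1 : MvPolynomial (Fin n) K)) = f i := by
  rw [proj, Finset.sum_eq_single i]
  · simp
  · intro j _ hj
    simp [Pi.single_apply, hj]
  · simp

lemma single_ne_zero' (i : Fin m) :
    (Pi.single i (1 : MvPolynomial (Fin n) K) : Fin m → MvPolynomial (Fin n) K) ≠ 0 := by
  intro h
  have := congrFun h i
  simp at this

lemma sigMon_single [NeZero m] (O : SigOrder n m) (i : Fin m) :
    sigMon O (Pi.single i (1 : MvPolynomial (Fin n) K)) = (0, i) := by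
  refine sigMon_eq_of O ?_ ?_
  · simp [mcoeff]
  · intro S hS
    by_cases h2 : S.2 = i
    · have h1 : S.1 = 0 := by
        by_contra h1
        apply hS
        unfold mcoeff
        rw [h2, Pi.single_eq_same, MvPolynomial.coeff_one, if_neg (Ne.symm h1)]
      have hSe : S = ((0 : Fin n →₀ ℕ), i) := Prod.ext h1 h2
      rw [hSe]; exact O.mle_refl _
    · exfalso
      apply hS
      unfold mcoeff
      rw [Pi.single_eq_of_ne h2]
      simp

lemma mmDvd_trans {S T U : (Fin n →₀ ℕ) × Fin m} (h1 : mmDvd S T) (h2 : mmDvd T U) :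
    mmDvd S U := by
  obtain ⟨c, rfl⟩ := h2
  obtain ⟨c', rfl⟩ := h1
  exact ⟨c + c', by simp [add_assoc]⟩

end Infra3
section Chains

open MvPolynomial Relation

variable {K : Type*} [Field K] {n m : ℕ} [NeZero m] {O : SigOrder n m}
  {f : Fin m → MvPolynomial (Fin n) K} {G : Set (Fin m → MvPolynomial (Fin n) K)}

/-- all module coefficients of `α` sit at monomials `≤ S` -/
def SigBnd (O : SigOrder n m) (α : Fin m → MvPolynomial (Fin n) K)
    (S : (Fin n →₀ ℕ) × Fin m) : Prop :=
  ∀ U, mcoeff α U ≠ 0 → O.mle U S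

lemma sigBnd_of_sigMon {α : Fin m → MvPolynomial (Fin n) K} {S} (hα : α ≠ 0)
    (h : O.mle (sigMon O α) S) : SigBnd O α S :=
  fun U hU => O.mle_trans ((sigMon_spec O hα).2 U hU) h

lemma sigMon_mle_of_sigBnd {α : Fin m → MvPolynomial (Fin n) K} {S} (hα : α ≠ 0)
    (h : SigBnd O α S) : O.mle (sigMon O α) S :=
  h _ (sigMon_spec O hα).1

lemma sigBnd_sub {α β : Fin m → MvPolynomial (Fin n) K} {S} (hα : SigBnd O α S)
    (hβ : SigBnd O β S) : SigBnd O (α - β) S := by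
  intro U hU
  rw [mcoeff_sub] at hU
  by_cases h1 : mcoeff α U ≠ 0
  · exact hα U h1
  · push_neg at h1
    exact hβ U (fun h2 => hU (by rw [h1, h2, sub_zero]))

lemma coeff_sub_ne_zero {p q : MvPolynomial (Fin n) K} {ν : Fin n →₀ ℕ}
    (h : (p - q).coeff ν ≠ 0) : p.coeff ν ≠ 0 ∨ q.coeff ν ≠ 0 := by
  by_contra hc
  push_neg at hc
  exact h (by rw [MvPolynomial.coeff_sub, hc.1, hc.2, sub_zero])

/-- analysis of a single s-reduction step -/
lemma step_anal {χ η : Fin m → MvPolynomial (Fin n) K} (h : Step O f G χ η) :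
    ∃ β ∈ G, ∃ (ν : Fin n →₀ ℕ) (c : K) (μ : Fin n →₀ ℕ), c ≠ 0 ∧
      proj f β ≠ 0 ∧ β ≠ 0 ∧ (proj f χ).coeff μ ≠ 0 ∧
      ν + leadMon O (proj f β) = μ ∧
      O.mle (sigMon O ((monomial ν c : MvPolynomial (Fin n) K) • β)) (sigMon O χ) ∧
      η = χ - (monomial ν c : MvPolynomial (Fin n) K) • β := by
  obtain ⟨β, hβG, b, μ, ⟨⟨ν, c, hc, rfl⟩, hμ, hlt, hsig⟩, hη⟩ := h
  obtain ⟨hne, hlm, _⟩ := (leadTerm_eq_monomial_iff O hμ).mp hlt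
  have hπβ : proj f β ≠ 0 := fun h0 => hne (by rw [h0, mul_zero])
  have hβ0 : β ≠ 0 := ne_zero_of_proj hπβ
  rw [leadMon_monomial_mul O hc hπβ] at hlm
  exact ⟨β, hβG, ν, c, μ, hc, hπβ, hβ0, hμ, hlm, hsig, hη⟩

/-- along an s-reduction chain ending in a syzygy, the initial lead monomial must
eventually be reduced -/
lemma chain_hit {S : (Fin n →₀ ℕ) × Fin m} {L : Fin n →₀ ℕ}
    {ζ γ : Fin m → MvPolynomial (Fin n) K}
    (hchain : ReflTransGen (Step O f G) ζ γ) (hγ : proj f γ = 0)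
    (hbnd : SigBnd O ζ S) (hL : (proj f ζ).coeff L ≠ 0)
    (hsup : ∀ ν, (proj f ζ).coeff ν ≠ 0 → O.rle ν L) :
    ∃ β ∈ G, ∃ ν, proj f β ≠ 0 ∧ β ≠ 0 ∧ ν + leadMon O (proj f β) = L ∧
      O.mle (sigMon O ((monomial ν (1:K) : MvPolynomial (Fin n) K) • β)) S := by
  revert hbnd hL hsup
  induction hchain using Relation.ReflTransGen.head_induction_on with
  | refl =>
    intro hbnd hL hsup
    exact absurd (by rw [hγ]; simp) hL
  | @head χ η hstep hrest ih =>
    intro hbnd hL hsup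
    obtain ⟨β, hβG, ν, c, μ, hc, hπβ, hβ0, hμ, hνμ, hsig, rfl⟩ := step_anal hstep
    have hχ0 : χ ≠ 0 := ne_zero_of_proj (fun h0 => hμ (by rw [h0]; simp))
    have hsigχ : O.mle (sigMon O χ) S := sigMon_mle_of_sigBnd hχ0 hbnd
    have hmleS : O.mle (sigMon O ((monomial ν c : MvPolynomial (Fin n) K) • β)) S :=
      O.mle_trans hsig hsigχ
    have hsig1 : sigMon O ((monomial ν (1:K) : MvPolynomial (Fin n) K) • β) =
        sigMon O ((monomial ν c : MvPolynomial (Fin n) K) • β) := by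
      rw [sigMon_monomial_smul O one_ne_zero hβ0, sigMon_monomial_smul O hc hβ0]
    by_cases hμL : μ = L
    · exact ⟨β, hβG, ν, hπβ, hβ0, hμL ▸ hνμ, hsig1 ▸ hmleS⟩
    · have hlmβ : leadMon O ((monomial ν c : MvPolynomial (Fin n) K) * proj f β) = μ := by
        rw [leadMon_monomial_mul O hc hπβ]; exact hνμ
      have hcoeffL : ((monomial ν c : MvPolynomial (Fin n) K) * proj f β).coeff L = 0 := by
        apply coeff_leadMon_eq_zero O
        rw [hlmβ]
        intro hLμ
        exact hμL (O.rle_antisymm (hsup μ hμ) hLμ)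
      apply ih
      · exact sigBnd_sub hbnd (sigBnd_of_sigMon (monomial_smul_ne_zero hc hβ0) hmleS)
      · rw [proj_sub, proj_smul, MvPolynomial.coeff_sub, hcoeffL, sub_zero]
        exact hL
      · intro ν' hν'
        rw [proj_sub, proj_smul] at hν'
        rcases coeff_sub_ne_zero hν' with h1 | h1
        · exact hsup ν' h1
        · refine O.rle_trans ?_ (hsup μ hμ)
          have := (leadMon_spec O (monomial_mul_ne_zero hc hπβ)).2 ν' h1
          rwa [hlmβ] at this

/-- along an s-reduction chain ending in a syzygy, either the signature survives to
the end (giving a syzygy of that signature), or the signature is cancelled by a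
monomial multiple of a reducer -/
lemma chain_drop {T' : (Fin n →₀ ℕ) × Fin m} {P : (Fin n →₀ ℕ) → Prop}
    (hP : ∀ ν ν', O.rle ν ν' → P ν' → P ν)
    {ζ γ : Fin m → MvPolynomial (Fin n) K}
    (hchain : ReflTransGen (Step O f G) ζ γ) (hγ : proj f γ = 0)
    (hT : mcoeff ζ T' ≠ 0) (hbnd : SigBnd O ζ T')
    (hsup : ∀ ν, (proj f ζ).coeff ν ≠ 0 → P ν) :
    (∃ s : Fin m → MvPolynomial (Fin n) K, s ≠ 0 ∧ proj f s = 0 ∧ sigMon O s = T') ∨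
    (∃ β ∈ G, ∃ ν, proj f β ≠ 0 ∧ β ≠ 0 ∧
      sigMon O ((monomial ν (1:K) : MvPolynomial (Fin n) K) • β) = T' ∧
      P (ν + leadMon O (proj f β))) := by
  revert hT hbnd hsup
  induction hchain using Relation.ReflTransGen.head_induction_on with
  | refl =>
    intro hT hbnd hsup
    exact Or.inl ⟨γ, ne_zero_of_mcoeff hT, hγ, sigMon_eq_of O hT hbnd⟩
  | @head χ η hstep hrest ih =>
    intro hT hbnd hsup
    obtain ⟨β, hβG, ν, c, μ, hc, hπβ, hβ0, hμ, hνμ, hsig, rfl⟩ := step_anal hstep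
    have hχ0 : χ ≠ 0 := ne_zero_of_mcoeff hT
    have hsigχ : O.mle (sigMon O χ) T' := sigMon_mle_of_sigBnd hχ0 hbnd
    have hmleS : O.mle (sigMon O ((monomial ν c : MvPolynomial (Fin n) K) • β)) T' :=
      O.mle_trans hsig hsigχ
    have hbβ : SigBnd O ((monomial ν c : MvPolynomial (Fin n) K) • β) T' :=
      sigBnd_of_sigMon (monomial_smul_ne_zero hc hβ0) hmleS
    have hsig1 : sigMon O ((monomial ν (1:K) : MvPolynomial (Fin n) K) • β) =
        sigMon O ((monomial ν c : MvPolynomial (Fin n) K) • β) := by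
      rw [sigMon_monomial_smul O one_ne_zero hβ0, sigMon_monomial_smul O hc hβ0]
    by_cases hcT : mcoeff (χ - (monomial ν c : MvPolynomial (Fin n) K) • β) T' ≠ 0
    · apply ih hcT (sigBnd_sub hbnd hbβ)
      intro ν' hν'
      rw [proj_sub, proj_smul] at hν'
      rcases coeff_sub_ne_zero hν' with h1 | h1
      · exact hsup ν' h1
      · refine hP ν' μ ?_ (hsup μ hμ)
        have := (leadMon_spec O (monomial_mul_ne_zero hc hπβ)).2 ν' h1
        rwa [leadMon_monomial_mul O hc hπβ, hνμ] at this
    · push_neg at hcT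
      rw [mcoeff_sub, sub_eq_zero] at hcT
      have hbT : mcoeff ((monomial ν c : MvPolynomial (Fin n) K) • β) T' ≠ 0 :=
        hcT ▸ hT
      have hsigb : sigMon O ((monomial ν c : MvPolynomial (Fin n) K) • β) = T' :=
        sigMon_eq_of O hbT hbβ
      exact Or.inr ⟨β, hβG, ν, hπβ, hβ0, hsig1.trans hsigb, hνμ ▸ hsup μ hμ⟩

end Chains
section LemmaA

open MvPolynomial Relation

variable {K : Type*} [Field K] {n m : ℕ} [NeZero m] {O : SigOrder n m}
  {f : Fin m → MvPolynomial (Fin n) K} {G : Set (Fin m → MvPolynomial (Fin n) K)}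

/-- Lemma A, part 1: in a syzygy signature, every element with nonzero image is
regular top s-reducible (assuming a signature GB up to that signature). -/
lemma exists_reg_top_reducer {α : Fin m → MvPolynomial (Fin n) K} (hα : α ≠ 0)
    (hsyz : proj f α = 0) (hGB : IsSigGBUpTo O f G (sigMon O α))
    {ξ : Fin m → MvPolynomial (Fin n) K} (hsg : sigMon O ξ = sigMon O α)
    (hπξ : proj f ξ ≠ 0) :
    ∃ β ∈ G, ∃ ν, proj f β ≠ 0 ∧ β ≠ 0 ∧
      ν + leadMon O (proj f β) = leadMon O (proj f ξ) ∧
      O.mlt (sigMon O ((monomial ν (1:K) : MvPolynomial (Fin n) K) • β)) (sigMon O α) := by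
  set T := sigMon O α with hT
  have hξ0 : ξ ≠ 0 := ne_zero_of_proj hπξ
  have haξ : mcoeff ξ T ≠ 0 := hsg ▸ (sigMon_spec O hξ0).1
  have haα : mcoeff α T ≠ 0 := (sigMon_spec O hα).1
  set κ : K := mcoeff ξ T / mcoeff α T with hκ
  have hκ0 : κ ≠ 0 := div_ne_zero haξ haα
  set ζ := ξ - (monomial 0 κ : MvPolynomial (Fin n) K) • α with hζ
  have hπα : proj f ((monomial 0 κ : MvPolynomial (Fin n) K) • α) = 0 := by
    rw [proj_smul, hsyz, mul_zero]
  have hπζ : proj f ζ = proj f ξ := by rw [hζ, proj_sub, hπα, sub_zero]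
  have hζπ : proj f ζ ≠ 0 := by rw [hπζ]; exact hπξ
  have hζ0 : ζ ≠ 0 := ne_zero_of_proj hζπ
  have hmsmul : ∀ U, mcoeff ((monomial 0 κ : MvPolynomial (Fin n) K) • α) U = κ * mcoeff α U := by
    intro U
    rw [mcoeff_monomial_smul, if_pos (by simp : (0 : Fin n →₀ ℕ) ≤ U.1)]
    simp
  have hcT : mcoeff ζ T = 0 := by
    rw [hζ, mcoeff_sub, hmsmul, hκ, div_mul_cancel₀ _ haα, sub_self]
  have hbndζ : SigBnd O ζ T := by
    refine sigBnd_sub (sigBnd_of_sigMon hξ0 (by rw [hsg, hT]; exact O.mle_refl T)) ?_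
    intro U hU
    rw [hmsmul] at hU
    exact (sigMon_spec O hα).2 U (fun h => hU (by rw [h, mul_zero]))
  have hmltζ : O.mlt (sigMon O ζ) T := by
    refine ⟨sigMon_mle_of_sigBnd hζ0 hbndζ, fun h => ?_⟩
    exact (sigMon_spec O hζ0).1 (h ▸ hcT)
  obtain ⟨γ, hchain, hγ⟩ := hGB (sigMon O ζ) hmltζ ζ hζ0 rfl
  obtain ⟨β, hβG, ν, hπβ, hβ0, hνL, hmle⟩ := chain_hit hchain hγ
    (sigBnd_of_sigMon hζ0 (O.mle_refl _)) (leadMon_spec O hζπ).1 (leadMon_spec O hζπ).2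
  refine ⟨β, hβG, ν, hπβ, hβ0, ?_, O.mlt_of_mle_of_mlt hmle hmltζ⟩
  rw [← hπζ]; exact hνL

/-- Lemma A, part 2: in a syzygy signature, every element regular s-reduces to zero. -/
lemma regRed_at_top {α : Fin m → MvPolynomial (Fin n) K} (hα : α ≠ 0)
    (hsyz : proj f α = 0) (hGB : IsSigGBUpTo O f G (sigMon O α)) :
    ∀ ξ : Fin m → MvPolynomial (Fin n) K, ξ ≠ 0 → sigMon O ξ = sigMon O α →
      RegSReducesToZero O f G ξ := by
  suffices main : ∀ L : Fin n →₀ ℕ, ∀ ξ : Fin m → MvPolynomial (Fin n) K, ξ ≠ 0 →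
      sigMon O ξ = sigMon O α → proj f ξ ≠ 0 → leadMon O (proj f ξ) = L →
      RegSReducesToZero O f G ξ by
    intro ξ hξ hsg
    by_cases hπ : proj f ξ = 0
    · exact ⟨ξ, Relation.ReflTransGen.refl, hπ⟩
    · exact main _ ξ hξ hsg hπ rfl
  refine fun L => O.rle_wf.induction
    (C := fun L => ∀ ξ : Fin m → MvPolynomial (Fin n) K, ξ ≠ 0 →
      sigMon O ξ = sigMon O α → proj f ξ ≠ 0 → leadMon O (proj f ξ) = L →
      RegSReducesToZero O f G ξ) L ?_
  intro L ih ξ hξ0 hsg hπξ hlm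
  obtain ⟨β, hβG, ν, hπβ, hβ0, hνL, hmlt⟩ := exists_reg_top_reducer hα hsyz hGB hsg hπξ
  rw [hlm] at hνL
  set c : K := leadCoeff O (proj f ξ) * (leadCoeff O (proj f β))⁻¹ with hc
  have hc0 : c ≠ 0 :=
    mul_ne_zero (leadCoeff_ne_zero O hπξ) (inv_ne_zero (leadCoeff_ne_zero O hπβ))
  have hlmb : leadMon O ((monomial ν c : MvPolynomial (Fin n) K) * proj f β) = L := by
    rw [leadMon_monomial_mul O hc0 hπβ, hνL]
  have hlcb : leadCoeff O ((monomial ν c : MvPolynomial (Fin n) K) * proj f β) =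
      leadCoeff O (proj f ξ) := by
    rw [leadCoeff_monomial_mul O hc0 hπβ, hc, mul_assoc,
      inv_mul_cancel₀ (leadCoeff_ne_zero O hπβ), mul_one]
  have hcL : (proj f ξ).coeff L = leadCoeff O (proj f ξ) := by rw [leadCoeff, hlm]
  have hcLne : (proj f ξ).coeff L ≠ 0 := by rw [hcL]; exact leadCoeff_ne_zero O hπξ
  have hsigc : sigMon O ((monomial ν c : MvPolynomial (Fin n) K) • β) =
      sigMon O ((monomial ν (1:K) : MvPolynomial (Fin n) K) • β) := by
    rw [sigMon_monomial_smul O one_ne_zero hβ0, sigMon_monomial_smul O hc0 hβ0]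
  have hmltc : O.mlt (sigMon O ((monomial ν c : MvPolynomial (Fin n) K) • β))
      (sigMon O ξ) := by
    rw [hsigc, hsg]; exact hmlt
  have hsred : RegSRed O f ξ β (monomial ν c) L := by
    refine ⟨⟨⟨ν, c, hc0, rfl⟩, hcLne, ?_, hmltc.1⟩, hmltc.2⟩
    refine (leadTerm_eq_monomial_iff O hcLne).mpr
      ⟨monomial_mul_ne_zero hc0 hπβ, hlmb, by rw [hlcb, hcL]⟩
  set ξ₁ := ξ - (monomial ν c : MvPolynomial (Fin n) K) • β with hξ₁
  have hregstep : RegStep O f G ξ ξ₁ := ⟨β, hβG, monomial ν c, L, hsred, rfl⟩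
  have hbT : mcoeff ((monomial ν c : MvPolynomial (Fin n) K) • β) (sigMon O α) = 0 := by
    by_contra h
    have := (sigMon_spec O (monomial_smul_ne_zero hc0 hβ0)).2 _ h
    rw [hsigc] at this
    exact hmlt.2 (O.mle_antisymm hmlt.1 this)
  have hcT1 : mcoeff ξ₁ (sigMon O α) ≠ 0 := by
    rw [hξ₁, mcoeff_sub, hbT, sub_zero, ← hsg]
    exact (sigMon_spec O hξ0).1
  have hξ₁0 : ξ₁ ≠ 0 := ne_zero_of_mcoeff hcT1
  have hbnd₁ : SigBnd O ξ₁ (sigMon O α) := by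
    refine sigBnd_sub (sigBnd_of_sigMon hξ0 (by rw [hsg]; exact O.mle_refl _)) ?_
    exact sigBnd_of_sigMon (monomial_smul_ne_zero hc0 hβ0) (by rw [hsigc]; exact hmlt.1)
  have hsg₁ : sigMon O ξ₁ = sigMon O α := sigMon_eq_of O hcT1 hbnd₁
  have hπ₁ : proj f ξ₁ = proj f ξ - (monomial ν c : MvPolynomial (Fin n) K) * proj f β := by
    rw [hξ₁, proj_sub, proj_smul]
  have hcoeff₁L : (proj f ξ₁).coeff L = 0 := by
    rw [hπ₁, MvPolynomial.coeff_sub, hcL, ← hlcb, leadCoeff, hlmb, sub_self]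
  have hbnd₁L : ∀ ν', (proj f ξ₁).coeff ν' ≠ 0 → O.rlt ν' L := by
    intro ν' hν'
    refine ⟨?_, fun h => hν' (h ▸ hcoeff₁L)⟩
    rw [hπ₁] at hν'
    rcases coeff_sub_ne_zero hν' with h1 | h1
    · exact hlm ▸ (leadMon_spec O hπξ).2 ν' h1
    · exact hlmb ▸ (leadMon_spec O (monomial_mul_ne_zero hc0 hπβ)).2 ν' h1
  by_cases hπz : proj f ξ₁ = 0
  · exact ⟨ξ₁, Relation.ReflTransGen.single hregstep, hπz⟩
  · obtain ⟨γ, hchain, hγ0⟩ := ih (leadMon O (proj f ξ₁))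
      (hbnd₁L _ (leadMon_spec O hπz).1) ξ₁ hξ₁0 hsg₁ hπz rfl
    exact ⟨γ, Relation.ReflTransGen.head hregstep hchain, hγ0⟩

end LemmaA
section MainAux

open MvPolynomial Relation

variable {K : Type*} [Field K] {n m : ℕ}

lemma monLcm_apply (μ ν : Fin n →₀ ℕ) (x : Fin n) : monLcm μ ν x = max (μ x) (ν x) := by
  rw [monLcm, Finsupp.zipWith_apply]

lemma le_monLcm_left (μ ν : Fin n →₀ ℕ) : μ ≤ monLcm μ ν := by
  rw [Finsupp.le_def]; intro x; rw [monLcm_apply]; exact le_max_left _ _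

lemma le_monLcm_right (μ ν : Fin n →₀ ℕ) : ν ≤ monLcm μ ν := by
  rw [Finsupp.le_def]; intro x; rw [monLcm_apply]; exact le_max_right _ _

set_option maxHeartbeats 1000000 in
lemma main_aux [Field K] [NeZero m] (O : SigOrder n m)
    (f : Fin m → MvPolynomial (Fin n) K)
    (G : Finset (Fin m → MvPolynomial (Fin n) K)) (T : (Fin n →₀ ℕ) × Fin m) :
    ∀ α : Fin m → MvPolynomial (Fin n) K, α ≠ 0 → proj f α = 0 → sigMon O α = T →
      IsSigGBUpTo O f ↑G T →
      ∃ β : Fin m → MvPolynomial (Fin n) K,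
        mmDvd (sigMon O β) T ∧
        ((∃ γ ∈ G, ∃ δ ∈ G, IsRegularSPair O f γ δ ∧ β = spair O f γ δ) ∨
          ∃ i : Fin m, β = Pi.single i (1 : MvPolynomial (Fin n) K)) ∧
        RegSReducesToZero O f ↑G β := by
  refine O.mle_wf.induction
    (C := fun T => ∀ α : Fin m → MvPolynomial (Fin n) K, α ≠ 0 → proj f α = 0 →
      sigMon O α = T → IsSigGBUpTo O f ↑G T →
      ∃ β : Fin m → MvPolynomial (Fin n) K,
        mmDvd (sigMon O β) T ∧
        ((∃ γ ∈ G, ∃ δ ∈ G, IsRegularSPair O f γ δ ∧ β = spair O f γ δ) ∨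
          ∃ i : Fin m, β = Pi.single i (1 : MvPolynomial (Fin n) K)) ∧
        RegSReducesToZero O f ↑G β) T ?_
  clear T
  intro T IH α hα hsyz hsg hGB
  have hdvdTT : mmDvd T T := ⟨0, by rw [zero_add]⟩
  by_cases hf : f T.2 = 0
  · -- `e_i` is itself a syzygy
    refine ⟨Pi.single T.2 1, ?_, Or.inr ⟨T.2, rfl⟩,
      ⟨Pi.single T.2 1, Relation.ReflTransGen.refl, by rw [proj_single]; exact hf⟩⟩
    rw [sigMon_single]
    exact ⟨T.1, by rw [add_zero]⟩
  by_cases hreach : ∃ δ ∈ (G : Set (Fin m → MvPolynomial (Fin n) K)), ∃ a : Fin n →₀ ℕ,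
      proj f δ ≠ 0 ∧ sigMon O ((monomial a (1:K) : MvPolynomial (Fin n) K) • δ) = T
  · -- the signature `T` is reachable from `G`
    obtain ⟨δ₀, hδ₀G, a₀, hπδ₀, hsig₀⟩ := hreach
    set Qset : Set (Fin n →₀ ℕ) := {x | ∃ δ ∈ (G : Set (Fin m → MvPolynomial (Fin n) K)),
      ∃ a : Fin n →₀ ℕ, proj f δ ≠ 0 ∧
        sigMon O ((monomial a (1:K) : MvPolynomial (Fin n) K) • δ) = T ∧
        x = a + leadMon O (proj f δ)} with hQset
    obtain ⟨x', hx', hmin⟩ := O.rle_wf.has_min Qset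
      ⟨a₀ + leadMon O (proj f δ₀), δ₀, hδ₀G, a₀, hπδ₀, hsig₀, rfl⟩
    obtain ⟨γ, hγG, a, hπγ, hsigγ, hxeq⟩ := hx'
    have hγ0 : γ ≠ 0 := ne_zero_of_proj hπγ
    have hπξ : proj f ((monomial a (1:K) : MvPolynomial (Fin n) K) • γ) =
        (monomial a (1:K) : MvPolynomial (Fin n) K) * proj f γ := proj_smul f _ γ
    have hπξ0 : proj f ((monomial a (1:K) : MvPolynomial (Fin n) K) • γ) ≠ 0 := by
      rw [hπξ]; exact monomial_mul_ne_zero one_ne_zero hπγ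
    have hsgξα : sigMon O ((monomial a (1:K) : MvPolynomial (Fin n) K) • γ) = sigMon O α :=
      hsigγ.trans hsg.symm
    obtain ⟨β₁, hβ₁G, ν₁, hπβ₁, hβ₁0, hν₁, hmlt₁⟩ :=
      exists_reg_top_reducer hα hsyz (hsg ▸ hGB) hsgξα hπξ0
    rw [hsg] at hmlt₁
    rw [hπξ, leadMon_monomial_mul O one_ne_zero hπγ] at hν₁
    -- set up the S-pair
    set Lγ := leadMon O (proj f γ) with hLγ
    set Lβ := leadMon O (proj f β₁) with hLβ
    set lam := monLcm Lγ Lβ with hlamdef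
    have hlam_le : lam ≤ a + Lγ := by
      rw [Finsupp.le_def]
      intro x
      rw [hlamdef, monLcm_apply]
      refine max_le (by simp) ?_
      have := congrArg (fun z => z x) hν₁
      simp only [Finsupp.add_apply] at this
      calc Lβ x ≤ ν₁ x + Lβ x := Nat.le_add_left _ _
        _ = a x + Lγ x := this
        _ = (a + Lγ) x := (Finsupp.add_apply a Lγ x).symm
    set w := (a + Lγ) - lam with hwdef
    have hw : w + lam = a + Lγ := by
      rw [hwdef, add_comm]; exact add_tsub_cancel_of_le hlam_le
    set u := lam - Lγ with hudef
    have hu : Lγ + u = lam := by rw [hudef]; exact add_tsub_cancel_of_le (le_monLcm_left _ _)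
    set v := lam - Lβ with hvdef
    have hv : Lβ + v = lam := by rw [hvdef]; exact add_tsub_cancel_of_le (le_monLcm_right _ _)
    have hwu : w + u = a := by
      have h1 : (w + u) + Lγ = a + Lγ := by
        rw [add_assoc, add_comm u Lγ, hu, hw]
      exact add_right_cancel h1
    have hwv : w + v = ν₁ := by
      have h1 : (w + v) + Lβ = ν₁ + Lβ := by
        rw [add_assoc, add_comm v Lβ, hv, hw, hν₁]
      exact add_right_cancel h1
    set cγ := (leadCoeff O (proj f γ))⁻¹ with hcγ
    set cβ := (leadCoeff O (proj f β₁))⁻¹ with hcβ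
    have hcγ0 : cγ ≠ 0 := inv_ne_zero (leadCoeff_ne_zero O hπγ)
    have hcβ0 : cβ ≠ 0 := inv_ne_zero (leadCoeff_ne_zero O hπβ₁)
    set A := (monomial u cγ : MvPolynomial (Fin n) K) • γ with hA
    set B := (monomial v cβ : MvPolynomial (Fin n) K) • β₁ with hB
    set ρ := spair O f γ β₁ with hρdef
    have hρ : ρ = A - B := by rw [hρdef, spair]
    have hsigA : sigMon O A = (u + (sigMon O γ).1, (sigMon O γ).2) :=
      sigMon_monomial_smul O hcγ0 hγ0
    have hsigB : sigMon O B = (v + (sigMon O β₁).1, (sigMon O β₁).2) :=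
      sigMon_monomial_smul O hcβ0 hβ₁0
    have hsigaγ : sigMon O ((monomial a (1:K) : MvPolynomial (Fin n) K) • γ) =
        (a + (sigMon O γ).1, (sigMon O γ).2) := sigMon_monomial_smul O one_ne_zero hγ0
    have hsigν₁ : sigMon O ((monomial ν₁ (1:K) : MvPolynomial (Fin n) K) • β₁) =
        (ν₁ + (sigMon O β₁).1, (sigMon O β₁).2) := sigMon_monomial_smul O one_ne_zero hβ₁0
    have hAT : (w + (sigMon O A).1, (sigMon O A).2) = T := by
      rw [hsigA]
      dsimp only
      rw [← add_assoc, hwu, ← hsigaγ, hsigγ]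
    have hBT : (w + (sigMon O B).1, (sigMon O B).2) =
        sigMon O ((monomial ν₁ (1:K) : MvPolynomial (Fin n) K) • β₁) := by
      rw [hsigB, hsigν₁]
      dsimp only
      rw [← add_assoc, hwv]
    have hne : sigMon O A ≠ sigMon O B := by
      intro h
      rw [h, hBT] at hAT
      exact hmlt₁.2 hAT
    have hmleBA : O.mle (sigMon O B) (sigMon O A) := by
      by_contra h
      have h1 : O.mle (sigMon O A) (sigMon O B) := O.mle_of_not_mle h
      have h2 := O.mle_add w h1
      rw [hAT, hBT] at h2
      exact hmlt₁.2 (O.mle_antisymm h2 hmlt₁.1).symm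
    have hmltBA : O.mlt (sigMon O B) (sigMon O A) := ⟨hmleBA, fun h => hne h.symm⟩
    have hpair : IsRegularSPair O f γ β₁ := ⟨hπγ, hπβ₁, hne⟩
    have hA0 : A ≠ 0 := monomial_smul_ne_zero hcγ0 hγ0
    have hB0 : B ≠ 0 := monomial_smul_ne_zero hcβ0 hβ₁0
    have hmcB : mcoeff B (sigMon O A) = 0 := by
      by_contra h
      exact hne (O.mle_antisymm ((sigMon_spec O hB0).2 _ h) hmleBA)
    have hmcρ : mcoeff ρ (sigMon O A) ≠ 0 := by
      rw [hρ, mcoeff_sub, hmcB, sub_zero]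
      exact (sigMon_spec O hA0).1
    have hρ0 : ρ ≠ 0 := ne_zero_of_mcoeff hmcρ
    have hbndρ : SigBnd O ρ (sigMon O A) := by
      rw [hρ]
      exact sigBnd_sub (sigBnd_of_sigMon hA0 (O.mle_refl _))
        (sigBnd_of_sigMon hB0 hmleBA)
    have hsgρ : sigMon O ρ = sigMon O A := sigMon_eq_of O hmcρ hbndρ
    have hdvdρ : mmDvd (sigMon O ρ) T := ⟨w, by rw [hsgρ]; exact hAT.symm⟩
    have hπρ : proj f ρ = (monomial u cγ : MvPolynomial (Fin n) K) * proj f γ -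
        (monomial v cβ : MvPolynomial (Fin n) K) * proj f β₁ := by
      rw [hρ, hA, hB, proj_sub, proj_smul, proj_smul]
    have hlmA : leadMon O ((monomial u cγ : MvPolynomial (Fin n) K) * proj f γ) = lam := by
      rw [leadMon_monomial_mul O hcγ0 hπγ, ← hLγ, add_comm, hu]
    have hlmB : leadMon O ((monomial v cβ : MvPolynomial (Fin n) K) * proj f β₁) = lam := by
      rw [leadMon_monomial_mul O hcβ0 hπβ₁, ← hLβ, add_comm, hv]
    have hcoefflam : (proj f ρ).coeff lam = 0 := by
      have h1 : ((monomial u cγ : MvPolynomial (Fin n) K) * proj f γ).coeff lam = 1 := by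
        rw [← hlmA, ← leadCoeff, leadCoeff_monomial_mul O hcγ0 hπγ, hcγ,
          inv_mul_cancel₀ (leadCoeff_ne_zero O hπγ)]
      have h2 : ((monomial v cβ : MvPolynomial (Fin n) K) * proj f β₁).coeff lam = 1 := by
        rw [← hlmB, ← leadCoeff, leadCoeff_monomial_mul O hcβ0 hπβ₁, hcβ,
          inv_mul_cancel₀ (leadCoeff_ne_zero O hπβ₁)]
      rw [hπρ, MvPolynomial.coeff_sub, h1, h2, sub_self]
    have hsupρ : ∀ ν', (proj f ρ).coeff ν' ≠ 0 → O.rlt ν' lam := by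
      intro ν' hν'
      refine ⟨?_, fun h => hν' (h ▸ hcoefflam)⟩
      rw [hπρ] at hν'
      rcases coeff_sub_ne_zero hν' with h1 | h1
      · exact hlmA ▸ (leadMon_spec O (monomial_mul_ne_zero hcγ0 hπγ)).2 ν' h1
      · exact hlmB ▸ (leadMon_spec O (monomial_mul_ne_zero hcβ0 hπβ₁)).2 ν' h1
    by_cases hπρ0 : proj f ρ = 0
    · exact ⟨ρ, hdvdρ, Or.inl ⟨γ, hγG, β₁, hβ₁G, hpair, hρdef⟩,
        ⟨ρ, Relation.ReflTransGen.refl, hπρ0⟩⟩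
    by_cases hw0 : w = 0
    · -- the S-pair has signature exactly `T`
      have hTA : sigMon O ρ = T := by
        rw [hsgρ, ← hAT, hw0, zero_add]
      exact ⟨ρ, hdvdρ, Or.inl ⟨γ, hγG, β₁, hβ₁G, hpair, hρdef⟩,
        regRed_at_top hα hsyz (hsg ▸ hGB) ρ hρ0 (hTA.trans hsg.symm)⟩
    · -- the S-pair has signature strictly below `T`
      have hρTne : sigMon O ρ ≠ T := by
        intro h
        rw [h] at hsgρ
        have h1 : w + T.1 = T.1 := by
          have h2 := congrArg Prod.fst hAT
          rw [← hsgρ] at h2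
          exact h2
        exact hw0 (add_eq_right.mp h1)
      have hmltρ : O.mlt (sigMon O ρ) T := by
        refine ⟨?_, hρTne⟩
        have h1 := O.mle_add_left (sigMon O ρ) w
        rw [hsgρ] at h1 ⊢
        rw [hAT] at h1
        exact h1
      obtain ⟨γ₂, hchain₂, hγ₂⟩ := hGB (sigMon O ρ) hmltρ ρ hρ0 rfl
      have hPdown : ∀ ν ν', O.rle ν ν' → O.rlt ν' lam → O.rlt ν lam := by
        intro ν ν' h1 h2
        refine ⟨O.rle_trans h1 h2.1, fun h => ?_⟩
        exact h2.2 (O.rle_antisymm h2.1 (h ▸ h1))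
      rcases chain_drop hPdown hchain₂ hγ₂ ((sigMon_spec O hρ0).1)
        (sigBnd_of_sigMon hρ0 (O.mle_refl _)) hsupρ with
        ⟨s, hs0, hssyz, hsigs⟩ | ⟨β₂, hβ₂G, ν₂, hπβ₂, hβ₂0, hsig₂, hP₂⟩
      · -- the signature of the S-pair is a syzygy signature: recurse
        obtain ⟨β, hdvd, hform, hred⟩ := IH (sigMon O ρ) hmltρ s hs0 hssyz hsigs
          (fun S hS => hGB S (O.mlt_trans hS hmltρ))
        exact ⟨β, mmDvd_trans hdvd hdvdρ, hform, hred⟩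
      · -- contradiction with minimality
        exfalso
        have hsigβ₂ : sigMon O ((monomial (w + ν₂) (1:K) : MvPolynomial (Fin n) K) • β₂)
            = T := by
          rw [sigMon_monomial_smul O one_ne_zero hβ₂0]
          rw [sigMon_monomial_smul O one_ne_zero hβ₂0] at hsig₂
          rw [hsgρ] at hsig₂
          have h1 := congrArg Prod.fst hsig₂
          have h2 := congrArg Prod.snd hsig₂
          dsimp only at h1 h2
          rw [← hAT]
          exact Prod.ext (by dsimp only; rw [add_assoc, h1]) (by dsimp only; rw [h2])
        have hmem : (w + ν₂) + leadMon O (proj f β₂) ∈ Qset :=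
          ⟨β₂, hβ₂G, w + ν₂, hπβ₂, hsigβ₂, rfl⟩
        have hlt : O.rlt ((w + ν₂) + leadMon O (proj f β₂)) x' := by
          rw [hxeq, ← hw, add_assoc]
          rw [hsgρ] at hsig₂
          exact O.rlt_add w hP₂
        exact hmin _ hmem hlt
  · -- the signature `T` is not reachable from `G`
    by_cases hT0 : T = ((0 : Fin n →₀ ℕ), T.2)
    · -- `T = σ(e_i)`
      have hsgβ : sigMon O (Pi.single T.2 (1 : MvPolynomial (Fin n) K)) = sigMon O α := by
        rw [sigMon_single, hsg, ← hT0]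
      refine ⟨Pi.single T.2 1, ?_, Or.inr ⟨T.2, rfl⟩,
        regRed_at_top hα hsyz (hsg ▸ hGB) _ (single_ne_zero' T.2) hsgβ⟩
      rw [sigMon_single]
      exact ⟨T.1, by rw [add_zero]⟩
    · -- `σ(e_i) < T` : analyze an s-reduction of `e_i` to zero
      have hmlt₀ : O.mlt ((0 : Fin n →₀ ℕ), T.2) T := by
        refine ⟨?_, fun h => hT0 h.symm⟩
        have h1 := (O.compat 0 T.1 T.2).mp (O.zero_rle T.1)
        rw [Prod.mk.eta] at h1
        exact h1
      obtain ⟨γ₂, hchain₂, hγ₂⟩ := hGB ((0 : Fin n →₀ ℕ), T.2) hmlt₀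
        (Pi.single T.2 1) (single_ne_zero' T.2) (sigMon_single O T.2)
      rcases chain_drop (O := O) (f := f)
        (G := (G : Set (Fin m → MvPolynomial (Fin n) K)))
        (T' := ((0 : Fin n →₀ ℕ), T.2)) (P := fun _ => True)
        (fun _ _ _ _ => trivial) hchain₂ hγ₂
        (by have := (sigMon_spec O (single_ne_zero' (K := K) T.2)).1
            rwa [sigMon_single] at this)
        (sigBnd_of_sigMon (single_ne_zero' T.2)
          (by rw [sigMon_single]; exact O.mle_refl _))
        (fun _ _ => trivial) with
        ⟨s, hs0, hssyz, hsigs⟩ | ⟨β₂, hβ₂G, ν₂, hπβ₂, hβ₂0, hsig₂, _⟩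
      · -- `σ(e_i)` is a syzygy signature: recurse
        obtain ⟨β, hdvd, hform, hred⟩ := IH ((0 : Fin n →₀ ℕ), T.2) hmlt₀ s hs0 hssyz hsigs
          (fun S hS => hGB S (O.mlt_trans hS hmlt₀))
        refine ⟨β, mmDvd_trans hdvd ⟨T.1, ?_⟩, hform, hred⟩
        rw [add_zero]
      · -- `G` reaches `σ(e_i)`, hence `T`: contradiction
        exfalso
        apply hreach
        refine ⟨β₂, hβ₂G, T.1 + ν₂, hπβ₂, ?_⟩
        rw [sigMon_monomial_smul O one_ne_zero hβ₂0]
        rw [sigMon_monomial_smul O one_ne_zero hβ₂0] at hsig₂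
        obtain ⟨h1, h2⟩ := Prod.ext_iff.mp hsig₂
        dsimp only at h1 h2
        refine Prod.ext ?_ (by dsimp only; rw [h2])
        dsimp only
        rw [add_assoc, h1, add_zero]

end MainAux
/-- If `α` is a syzygy and `G` is a signature Gröbner basis up to
`σ(α)`, then some `β` with `σ(β) ∣ σ(α)` that is a regular S-pair of elements of
`G` or of the form `eᵢ` regular s-reduces to zero w.r.t. `G`. -/
theorem statement5 {K : Type*} [Field K] {n m : ℕ} [NeZero m]
    (O : SigOrder n m) (f : Fin m → MvPolynomial (Fin n) K)
    (G : Finset (Fin m → MvPolynomial (Fin n) K))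
    (α : Fin m → MvPolynomial (Fin n) K) (hα : α ≠ 0) (hsyz : proj f α = 0)
    (hGB : IsSigGBUpTo O f ↑G (sigMon O α)) :
    ∃ β : Fin m → MvPolynomial (Fin n) K,
      mmDvd (sigMon O β) (sigMon O α) ∧
      ((∃ γ ∈ G, ∃ δ ∈ G, IsRegularSPair O f γ δ ∧ β = spair O f γ δ) ∨
        ∃ i : Fin m, β = Pi.single i (1 : MvPolynomial (Fin n) K)) ∧
      RegSReducesToZero O f ↑G β := by
  exact main_aux O f G (sigMon O α) α hα hsyz rfl hGB

end SigGB
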